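/- arXiv:2309.01610 — 6 statements merged into one kernel-verified Lean document; each statement's English description precedes it below -/
import Mathlib

section
/- Suppose a deterministic top-k set S of candidates satisfies δ(S) = 0, i.e., nRel(A ∩ S)/nRel(A) = nRel(B ∩ S)/nRel(B), and suppose that S consists of the top k_A candidates of group A (by relevance probability) and the top k_B candidates of group B, with k_A + k_B = k, so that nRel(A ∩ S)/k_A ≥ nRel(A)/|A| and nRel(B ∩ S)/k_B ≥ nRel(B)/|B|. Then nRel(A ∩ S)/nRel(A) ≥ k/n where n = |A| + |B|. Consequently the group costs 1 - nRel(g ∩ S)/nRel(g) for g ∈ {A,B} and the total cost 1 - (nRel(A∩S)+nRel(B∩S))/(nRel(A)+nRel(B)) are all at most 1 - k/n, the expected cost of the uniform lottery. -/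
/-!
Write `r = nRel(A ∩ S)/nRel(A)`, which by `δ(S) = 0` is also `nRel(B ∩ S)/nRel(B)`. The average
condition for a group `g` rearranges to `k_g ≤ r |g|`; adding the two gives `k ≤ r n`. The total
proportion selected is the mediant of two equal fractions, hence again `r`.
-/

open Finset

lemma card_pos_of_sum_ne_zero {ι M : Type*} [AddCommMonoid M] {s : Finset ι} {p : ι → M}
    (h : ∑ i ∈ s, p i ≠ 0) : 0 < s.card :=
  card_pos.mpr (nonempty_iff_ne_empty.mpr (by rintro rfl; exact h sum_empty))

section OrderedField

variable {K : Type*} [Field K] [LinearOrder K] [IsStrictOrderedRing K]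

lemma natCast_le_div_mul_of_div_le_div {R s : K} {k m : ℕ} (hR : 0 < R) (hm : 0 < m)
    (h : R / m ≤ s / k) : (k : K) ≤ s / R * m := by
  have hm' : (0 : K) < m := by exact_mod_cast hm
  have hk : (0 : K) < k := by
    rcases Nat.eq_zero_or_pos k with rfl | hk
    · rw [Nat.cast_zero, div_zero] at h
      exact absurd h (div_pos hR hm').not_ge
    · exact_mod_cast hk
  rw [div_le_div_iff₀ hm' hk] at h
  rw [div_mul_eq_mul_div, le_div_iff₀ hR]
  linarith

lemma add_div_add_eq_of_div_eq_div {a b c d : K} (hc : 0 < c) (hd : 0 < d)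
    (h : a / c = b / d) : (a + b) / (c + d) = a / c := by
  rw [div_eq_div_iff hc.ne' hd.ne'] at h
  rw [div_eq_div_iff (by positivity) hc.ne']
  linarith

end OrderedField

theorem stmt_2_general {ι : Type*} [DecidableEq ι] (A B S : Finset ι) (p : ι → ℝ)
    (hA : 0 < ∑ i ∈ A, p i) (hB : 0 < ∑ i ∈ B, p i)
    (kA kB k n : ℕ)
    (hk : k = kA + kB)
    (hn : n = A.card + B.card)
    (hδ : (∑ i ∈ A ∩ S, p i) / (∑ i ∈ A, p i)
        = (∑ i ∈ B ∩ S, p i) / (∑ i ∈ B, p i))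
    (havgA : (∑ i ∈ A ∩ S, p i) / (kA : ℝ) ≥ (∑ i ∈ A, p i) / (A.card : ℝ))
    (havgB : (∑ i ∈ B ∩ S, p i) / (kB : ℝ) ≥ (∑ i ∈ B, p i) / (B.card : ℝ)) :
    (∑ i ∈ A ∩ S, p i) / (∑ i ∈ A, p i) ≥ (k : ℝ) / (n : ℝ)
    ∧ 1 - (∑ i ∈ A ∩ S, p i) / (∑ i ∈ A, p i) ≤ 1 - (k : ℝ) / (n : ℝ)
    ∧ 1 - (∑ i ∈ B ∩ S, p i) / (∑ i ∈ B, p i) ≤ 1 - (k : ℝ) / (n : ℝ)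
    ∧ 1 - ((∑ i ∈ A ∩ S, p i) + (∑ i ∈ B ∩ S, p i))
            / ((∑ i ∈ A, p i) + (∑ i ∈ B, p i)) ≤ 1 - (k : ℝ) / (n : ℝ) := by
  set r := (∑ i ∈ A ∩ S, p i) / (∑ i ∈ A, p i)
  have hAcard := card_pos_of_sum_ne_zero hA.ne'
  have hkA : (kA : ℝ) ≤ r * A.card := natCast_le_div_mul_of_div_le_div hA hAcard havgA
  have hkB : (kB : ℝ) ≤ r * B.card := hδ ▸ natCast_le_div_mul_of_div_le_div hB
    (card_pos_of_sum_ne_zero hB.ne') havgB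
  have hkn : (k : ℝ) / n ≤ r := by
    rw [div_le_iff₀ (by rw [hn]; positivity), hk, hn]
    push_cast
    linarith
  refine ⟨hkn, by linarith, by rw [← hδ]; linarith, ?_⟩
  rw [add_div_add_eq_of_div_eq_div hA hB hδ]
  linarith

/-- If a top-k set S has δ(S) = 0 and consists of the top k_A
candidates of A and top k_B candidates of B (so the selected averages exceed
the group averages), then the selected relevance proportion is at least k/n,
and hence all group costs and the total cost are at most 1 - k/n, the expected
cost of the uniform lottery. -/
theorem stmt_2 {ι : Type*} [DecidableEq ι] (A B S : Finset ι) (p : ι → ℝ)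
    (hdisj : Disjoint A B)
    (hp : ∀ i, 0 ≤ p i ∧ p i ≤ 1)
    (hA : 0 < ∑ i ∈ A, p i) (hB : 0 < ∑ i ∈ B, p i)
    (kA kB k n : ℕ)
    (hkA : kA = (A ∩ S).card) (hkB : kB = (B ∩ S).card)
    (hkA1 : 1 ≤ kA) (hkB1 : 1 ≤ kB) (hk : k = kA + kB)
    (hn : n = A.card + B.card)
    (hδ : (∑ i ∈ A ∩ S, p i) / (∑ i ∈ A, p i)
        = (∑ i ∈ B ∩ S, p i) / (∑ i ∈ B, p i))
    (havgA : (∑ i ∈ A ∩ S, p i) / (kA : ℝ) ≥ (∑ i ∈ A, p i) / (A.card : ℝ))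
    (havgB : (∑ i ∈ B ∩ S, p i) / (kB : ℝ) ≥ (∑ i ∈ B, p i) / (B.card : ℝ)) :
    (∑ i ∈ A ∩ S, p i) / (∑ i ∈ A, p i) ≥ (k : ℝ) / (n : ℝ)
    ∧ 1 - (∑ i ∈ A ∩ S, p i) / (∑ i ∈ A, p i) ≤ 1 - (k : ℝ) / (n : ℝ)
    ∧ 1 - (∑ i ∈ B ∩ S, p i) / (∑ i ∈ B, p i) ≤ 1 - (k : ℝ) / (n : ℝ)
    ∧ 1 - ((∑ i ∈ A ∩ S, p i) + (∑ i ∈ B ∩ S, p i))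
            / ((∑ i ∈ A, p i) + (∑ i ∈ B, p i)) ≤ 1 - (k : ℝ) / (n : ℝ) :=
  stmt_2_general A B S p hA hB kA kB k n hk hn hδ havgA havgB
end

section
/- With λ_{A,B}, λ_{B,A}, λ_k as in the dual construction, and for a candidate i ∈ A with p_i ≤ p_A (so q_i = p_i/nRel(A) ≤ q_A), the quantity p_i/(nRel(A)+nRel(B)) - λ_k - q_i(λ_{A,B} - λ_{B,A}) is ≤ 0; hence the clipped dual variable λ'_i = [p_i/(nRel(A)+nRel(B)) - λ_k - q_i(λ_{A,B} - λ_{B,A})]_+ equals 0. Conversely, if p_i ≥ p_A then that quantity is ≥ 0. -/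
/-!
Since `λ_k` is chosen so that the slack vanishes at `p_i = p_A`, and `q_i = p_i / nRel(A)`, the
slack is the affine function `(p_i - p_A) * (1 / (nRel(A) + nRel(B)) - (λ_{A,B} - λ_{B,A}) / nRel(A))`
of `p_i`. Its slope is nonnegative because `(p_A - p_B) / (q_A + q_B) ≤ nRel(A)`, which after
clearing the denominator reads `p_A - p_B ≤ p_A + nRel(A) q_B`.
-/

lemma sub_div_div_add_div_le {pA pB nA nB : ℝ} (hpA : 0 ≤ pA) (hpB : 0 < pB)
    (hnA : 0 < nA) (hnB : 0 < nB) : (pA - pB) / (pA / nA + pB / nB) ≤ nA := by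
  have hqB : 0 < pB / nB := by positivity
  rw [div_le_iff₀ (by positivity), mul_add, mul_div_cancel₀ _ hnA.ne']
  nlinarith

lemma one_div_sub_div_div_nonneg {x nA nB : ℝ} (hnA : 0 < nA) (hnB : 0 < nB) (hx : x ≤ nA) :
    0 ≤ 1 / (nA + nB) - x / (nA + nB) / nA := by
  rw [sub_nonneg, div_div, div_le_div_iff₀ (by positivity) (by positivity)]
  nlinarith

theorem stmt_5_general (pA pB nA nB : ℝ)
    (hpA : 0 < pA) (hpB : 0 < pB)
    (hnA : 0 < nA) (hnB : 0 < nB)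
    (qA qB lAB lBA lk : ℝ)
    (hqA : qA = pA / nA) (hqB : qB = pB / nB)
    (hlAB : lAB = max ((pA - pB) / (qA + qB)) 0 / (nA + nB))
    (hlBA : lBA = max (-((pA - pB) / (qA + qB))) 0 / (nA + nB))
    (hlk : lk = pA / (nA + nB) - qA * (lAB - lBA))
    (pi qi : ℝ) (hqi : qi = pi / nA) :
    (pi ≤ pA →
      pi / (nA + nB) - lk - qi * (lAB - lBA) ≤ 0
      ∧ max (pi / (nA + nB) - lk - qi * (lAB - lBA)) 0 = 0)
    ∧ (pA ≤ pi → 0 ≤ pi / (nA + nB) - lk - qi * (lAB - lBA)) := by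
  have hdiff : lAB - lBA = (pA - pB) / (qA + qB) / (nA + nB) := by
    rw [hlAB, hlBA, div_sub_div_same, max_zero_sub_max_neg_zero_eq_self]
  have hslack : pi / (nA + nB) - lk - qi * (lAB - lBA)
      = (pi - pA) * (1 / (nA + nB) - (lAB - lBA) / nA) := by
    rw [hlk, hqA, hqi]
    ring
  have hslope : 0 ≤ 1 / (nA + nB) - (lAB - lBA) / nA := by
    rw [hdiff, hqA, hqB]
    exact one_div_sub_div_div_nonneg hnA hnB (sub_div_div_add_div_le hpA.le hpB hnA hnB)
  refine ⟨fun h => ?_, fun h => ?_⟩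
  · have hle : pi / (nA + nB) - lk - qi * (lAB - lBA) ≤ 0 :=
      hslack ▸ mul_nonpos_of_nonpos_of_nonneg (sub_nonpos.2 h) hslope
    exact ⟨hle, max_eq_right hle⟩
  · exact hslack ▸ mul_nonneg (sub_nonneg.2 h) hslope

/-- With the constructed dual variables, for a candidate i ∈ A
with p_i ≤ p_A the slack p_i/(nRel(A)+nRel(B)) - λ_k - q_i(λ_{A,B} - λ_{B,A})
is ≤ 0, hence the clipped dual variable λ'_i = [slack]_+ equals 0;
conversely if p_i ≥ p_A the slack is ≥ 0. -/
theorem stmt_5 (pA pB nA nB : ℝ)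
    (hpA : 0 < pA) (hpA1 : pA ≤ 1) (hpB : 0 < pB) (hpB1 : pB ≤ 1)
    (hnA : 0 < nA) (hnB : 0 < nB)
    (qA qB lAB lBA lk : ℝ)
    (hqA : qA = pA / nA) (hqB : qB = pB / nB)
    (hlAB : lAB = max ((pA - pB) / (qA + qB)) 0 / (nA + nB))
    (hlBA : lBA = max (-((pA - pB) / (qA + qB))) 0 / (nA + nB))
    (hlk : lk = pA / (nA + nB) - qA * (lAB - lBA))
    (pi qi : ℝ) (hpi0 : 0 ≤ pi) (hpi1 : pi ≤ 1) (hqi : qi = pi / nA) :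
    (pi ≤ pA →
      pi / (nA + nB) - lk - qi * (lAB - lBA) ≤ 0
      ∧ max (pi / (nA + nB) - lk - qi * (lAB - lBA)) 0 = 0)
    ∧ (pA ≤ pi → 0 ≤ pi / (nA + nB) - lk - qi * (lAB - lBA)) :=
  stmt_5_general pA pB nA nB hpA hpB hnA hnB qA qB lAB lBA lk hqA hqB hlAB hlBA hlk pi qi hqi
end

section
/- Suppose a feasible integer solution X (the EOR solution selecting the top k_A candidates of A and top k_B of B, k_A + k_B = k) satisfies |Σ_{i=1}^{k_A} q_i - Σ_{j=1}^{k_B} q_j| ≤ δ, where q_i = p_i/nRel(A) for selected i ∈ A and q_j = p_j/nRel(B) for selected j ∈ B, and suppose the constructed dual variables (λ_{A,B}, λ_{B,A}, λ_k, λ') are feasible for the dual LP with λ'_i = 0 for unselected candidates. Then the duality gap g(λ) - f(X) satisfies g(λ) - f(X) ≤ 2δ·max(λ_{A,B}, λ_{B,A}) = (2δ/(nRel(A)+nRel(B)))·|p_A - p_B|/(q_A + q_B). Hence the EOR solution is within this additive gap of the LP (and ILP) optimum. -/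
/-!
Summed over the selected candidates, the slacks `λ'_i` cancel both the `k λ_k` term and the
primal objective, leaving `g - f = δ (λ_{A,B} + λ_{B,A}) - (S_A - S_B) (λ_{A,B} - λ_{B,A})`.
Since `|S_A - S_B| ≤ δ`, this is at most
`δ (λ_{A,B} + λ_{B,A} + |λ_{A,B} - λ_{B,A}|) = 2 δ max(λ_{A,B}, λ_{B,A})`, and the maximum of the
positive and negative parts of `(p_A - p_B) / (q_A + q_B)` is its absolute value.
-/

open Finset

theorem Finset.sum_ite_mem_eq_sum_inter_add_sum_inter {ι M : Type*} [AddCommMonoid M]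
    [DecidableEq ι] {A B S : Finset ι} (hS : S ⊆ A ∪ B) (hAB : Disjoint A B) (u v : ι → M) :
    ∑ i ∈ S, (if i ∈ A then u i else v i) = ∑ i ∈ A ∩ S, u i + ∑ i ∈ B ∩ S, v i := by
  have hrest : S \ A = B ∩ S := by grind [disjoint_left]
  rw [sum_ite, filter_mem_eq_inter, filter_notMem_eq_sdiff, inter_comm S A, hrest]

theorem mul_add_sub_mul_sub_le_two_mul_max {α : Type*} [CommRing α] [LinearOrder α]
    [IsStrictOrderedRing α] {a b s δ : α} (h : |s| ≤ δ) :
    δ * (a + b) - s * (a - b) ≤ 2 * δ * max a b := by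
  have hcross : -(s * (a - b)) ≤ δ * |a - b| :=
    calc -(s * (a - b)) ≤ |s * (a - b)| := neg_le_abs _
      _ = |s| * |a - b| := abs_mul _ _
      _ ≤ δ * |a - b| := mul_le_mul_of_nonneg_right h (abs_nonneg _)
  have hmax : 2 * max a b = a + b + |a - b| := by
    rcases le_total a b with hab | hab
    · rw [max_eq_right hab, abs_of_nonpos (sub_nonpos.2 hab)]; ring
    · rw [max_eq_left hab, abs_of_nonneg (sub_nonneg.2 hab)]; ring
  linear_combination hcross - δ * hmax

theorem max_max_zero_max_neg_zero {α : Type*} [AddCommGroup α] [LinearOrder α]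
    [IsOrderedAddMonoid α] (x : α) : max (max x 0) (max (-x) 0) = |x| := by
  rw [max_max_max_comm, max_self, ← abs_eq_max_neg, max_eq_left (abs_nonneg x)]

theorem sum_slack_sub_objective_eq {ι : Type*} [Fintype ι] [DecidableEq ι] {A B S : Finset ι}
    (hS : S ⊆ A ∪ B) (hAB : Disjoint A B) (p l' : ι → ℝ) (nA nB N lk lAB lBA : ℝ)
    (hl' : ∀ i, l' i = if i ∈ S then
        (if i ∈ A then p i / N - lk - (p i / nA) * (lAB - lBA)
         else p i / N - lk - (p i / nB) * (lBA - lAB))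
      else 0) :
    (S.card : ℝ) * lk + ∑ i, l' i - (∑ i ∈ S, p i) / N
      = -((∑ i ∈ A ∩ S, p i / nA) - ∑ i ∈ B ∩ S, p i / nB) * (lAB - lBA) := by
  have hsupp : ∑ i, l' i = ∑ i ∈ S, l' i :=
    (sum_subset (subset_univ S) fun i _ hi ↦ by rw [hl', if_neg hi]).symm
  have hsummand : ∀ i ∈ S, lk + l' i - p i / N
      = if i ∈ A then -(p i / nA * (lAB - lBA)) else p i / nB * (lAB - lBA) := by
    intro i hi
    rw [hl', if_pos hi]
    split_ifs <;> ring
  calc (S.card : ℝ) * lk + ∑ i, l' i - (∑ i ∈ S, p i) / N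
      = ∑ i ∈ S, (lk + l' i - p i / N) := by
        rw [hsupp, sum_sub_distrib, sum_add_distrib, sum_const, nsmul_eq_mul, sum_div]
    _ = ∑ i ∈ S, if i ∈ A then -(p i / nA * (lAB - lBA)) else p i / nB * (lAB - lBA) :=
        sum_congr rfl hsummand
    _ = ∑ i ∈ A ∩ S, -(p i / nA * (lAB - lBA)) + ∑ i ∈ B ∩ S, p i / nB * (lAB - lBA) :=
        sum_ite_mem_eq_sum_inter_add_sum_inter hS hAB _ _
    _ = -((∑ i ∈ A ∩ S, p i / nA) - ∑ i ∈ B ∩ S, p i / nB) * (lAB - lBA) := by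
        rw [sum_neg_distrib, ← sum_mul, ← sum_mul]
        ring

theorem stmt_7_general {ι : Type*} [Fintype ι] [DecidableEq ι] (A B : Finset ι)
    (hpart : A ∪ B = Finset.univ) (hdisj : Disjoint A B)
    (p : ι → ℝ)
    (nA nB N : ℝ)
    (hnApos : 0 < nA) (hnBpos : 0 < nB) (hN : N = nA + nB)
    (S : Finset ι) (k : ℕ) (hk : k = S.card)
    (δ pA pB qA qB lAB lBA lk : ℝ)
    (hpApos : 0 < pA) (hpBpos : 0 < pB)
    (hqA : qA = pA / nA) (hqB : qB = pB / nB)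
    (hlAB : lAB = max ((pA - pB) / (qA + qB)) 0 / N)
    (hlBA : lBA = max (-((pA - pB) / (qA + qB))) 0 / N)
    (l' : ι → ℝ)
    (hl' : ∀ i, l' i = if i ∈ S then
        (if i ∈ A then p i / N - lk - (p i / nA) * (lAB - lBA)
         else p i / N - lk - (p i / nB) * (lBA - lAB))
      else 0)
    (SA SB : ℝ)
    (hSA : SA = ∑ i ∈ A ∩ S, p i / nA) (hSB : SB = ∑ i ∈ B ∩ S, p i / nB)
    (hgap : |SA - SB| ≤ δ)
    (f g : ℝ)
    (hf : f = (∑ i ∈ S, p i) / N)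
    (hg : g = δ * (lAB + lBA) + (k : ℝ) * lk + ∑ i, l' i) :
    g - f ≤ 2 * δ * max lAB lBA
    ∧ 2 * δ * max lAB lBA = (2 * δ / N) * (|pA - pB| / (qA + qB)) := by
  have hNpos : 0 < N := hN ▸ add_pos hnApos hnBpos
  have hqpos : 0 < qA + qB := by
    rw [hqA, hqB]
    positivity
  have hmax : max lAB lBA = |pA - pB| / (qA + qB) / N := by
    rw [hlAB, hlBA, max_div_div_right hNpos.le, max_max_zero_max_neg_zero, abs_div,
      abs_of_pos hqpos]
  have hgf : g - f = δ * (lAB + lBA) - (SA - SB) * (lAB - lBA) := by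
    rw [hg, hf, hk, hSA, hSB]
    linear_combination sum_slack_sub_objective_eq (hpart ▸ subset_univ S) hdisj p l' nA nB N lk
      lAB lBA hl'
  refine ⟨hgf ▸ mul_add_sub_mul_sub_le_two_mul_max hgap, ?_⟩
  rw [hmax]
  ring

/-- Duality gap bound for the two-group EOR solution. If the
selected set S (top candidates of each group) satisfies |S_A - S_B| ≤ δ and
the dual variables are constructed from the EOR solution (with λ'_i = 0 for
unselected candidates and equal to the slack for selected ones), then the
duality gap g(λ) - f(X) is at most 2δ·max(λ_{A,B}, λ_{B,A})
= (2δ/(nRel(A)+nRel(B)))·|p_A - p_B|/(q_A + q_B). -/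
theorem stmt_7 {ι : Type*} [Fintype ι] [DecidableEq ι] (A B : Finset ι)
    (hpart : A ∪ B = Finset.univ) (hdisj : Disjoint A B)
    (p : ι → ℝ) (hp : ∀ i, 0 ≤ p i ∧ p i ≤ 1)
    (nA nB N : ℝ) (hnA : nA = ∑ i ∈ A, p i) (hnB : nB = ∑ i ∈ B, p i)
    (hnApos : 0 < nA) (hnBpos : 0 < nB) (hN : N = nA + nB)
    (S : Finset ι) (k : ℕ) (hk : k = S.card)
    (δ pA pB qA qB lAB lBA lk : ℝ) (hδ : 0 ≤ δ)
    (hpApos : 0 < pA) (hpBpos : 0 < pB)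
    (hqA : qA = pA / nA) (hqB : qB = pB / nB)
    (hlAB : lAB = max ((pA - pB) / (qA + qB)) 0 / N)
    (hlBA : lBA = max (-((pA - pB) / (qA + qB))) 0 / N)
    (hlk : lk = pA / N - qA * (lAB - lBA))
    (l' : ι → ℝ)
    (hl' : ∀ i, l' i = if i ∈ S then
        (if i ∈ A then p i / N - lk - (p i / nA) * (lAB - lBA)
         else p i / N - lk - (p i / nB) * (lBA - lAB))
      else 0)
    (SA SB : ℝ)
    (hSA : SA = ∑ i ∈ A ∩ S, p i / nA) (hSB : SB = ∑ i ∈ B ∩ S, p i / nB)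
    (hgap : |SA - SB| ≤ δ)
    (f g : ℝ)
    (hf : f = (∑ i ∈ S, p i) / N)
    (hg : g = δ * (lAB + lBA) + (k : ℝ) * lk + ∑ i, l' i) :
    g - f ≤ 2 * δ * max lAB lBA
    ∧ 2 * δ * max lAB lBA = (2 * δ / N) * (|pA - pB| / (qA + qB)) :=
  stmt_7_general A B hpart hdisj p nA nB N hnApos hnBpos hN S k hk δ pA pB qA qB lAB lBA lk hpApos
    hpBpos hqA hqB hlAB hlBA l' hl' SA SB hSA hSB hgap f g hf hg
end

section
/- Let a_1 ≥ a_2 ≥ ... (nonnegative reals summing to 1) and b_1 ≥ b_2 ≥ ... (nonnegative reals summing to 1) be the normalized relevance sequences of groups A and B (a_i = p_i^A/nRel(A), b_j = p_j^B/nRel(B)). Define the greedy merge: start with partial sums S_A = S_B = 0; at each step, append the next element from the group that minimizes |(S_A + next_a) - S_B| versus |S_A - (S_B + next_b)| (taking the remaining group if one is exhausted). Then at every step k the partial sums satisfy |S_A - S_B| ≤ (a_1 + b_1)/2. -/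
/-! The discrepancy `d = S_A - S_B` starts at `0`, and with `c = (a₁ + b₁)/2` the bound `|d| ≤ c`
survives every greedy step. While both groups remain, the two candidate moves are `d + x` and
`d - y` with `0 ≤ x ≤ a₁`, `0 ≤ y ≤ b₁`: if `d + x` overshoots `c` then `d > c - a₁`, so
`d - y ≥ d - b₁ > -c`; hence one candidate, and therefore the greedy one, stays within `c`. Once
one group is exhausted its partial sum already equals the common total, so the remaining moves
bring `d` monotonically towards `0`. -/

/-- The greedy EOR merge of two sequences of normalized relevances: at each
step, append the next element of the group that minimizes the absolute
discrepancy of the partial sums; record the trace of partial sums (S_A, S_B). -/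
noncomputable def greedyTrace : List ℝ → List ℝ → ℝ → ℝ → List (ℝ × ℝ)
  | [], [], _, _ => []
  | a :: as, [], sA, sB => (sA + a, sB) :: greedyTrace as [] (sA + a) sB
  | [], b :: bs, sA, sB => (sA, sB + b) :: greedyTrace [] bs sA (sB + b)
  | a :: as, b :: bs, sA, sB =>
    if |sA + a - sB| ≤ |sA - (sB + b)| then
      (sA + a, sB) :: greedyTrace as (b :: bs) (sA + a) sB
    else
      (sA, sB + b) :: greedyTrace (a :: as) bs sA (sB + b)
  termination_by a b _ _ => a.length + b.length

lemma min_abs_add_abs_sub_le {d x y c : ℝ} (hd : |d| ≤ c) (hx : 0 ≤ x) (hy : 0 ≤ y)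
    (hxy : x + y ≤ 2 * c) : min |d + x| |d - y| ≤ c := by
  obtain ⟨hdl, hdu⟩ := abs_le.mp hd
  by_cases hover : d + x ≤ c
  · exact min_le_of_left_le (abs_le.mpr ⟨by linarith, hover⟩)
  · exact min_le_of_right_le (abs_le.mpr ⟨by linarith, by linarith⟩)

lemma List.le_headD_of_pairwise_ge {l : List ℝ} (h : l.Pairwise (· ≥ ·)) :
    ∀ x ∈ l, x ≤ l.headD 0 := by
  cases l with
  | nil => simp
  | cons y l =>
    simp only [List.headD_cons, List.mem_cons, forall_eq_or_imp, le_refl, true_and]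
    exact (List.pairwise_cons.mp h).1

lemma List.headD_nonneg {l : List ℝ} (h : ∀ x ∈ l, 0 ≤ x) : 0 ≤ l.headD 0 := by
  cases l with
  | nil => rfl
  | cons y l => exact h y List.mem_cons_self

theorem abs_sub_le_of_mem_greedyTrace {A B : ℝ} (a b : List ℝ) (sA sB : ℝ)
    (ha : ∀ x ∈ a, 0 ≤ x ∧ x ≤ A) (hb : ∀ x ∈ b, 0 ≤ x ∧ x ≤ B)
    (hsum : sA + a.sum = sB + b.sum) (hd : |sA - sB| ≤ (A + B) / 2) :
    ∀ s ∈ greedyTrace a b sA sB, |s.1 - s.2| ≤ (A + B) / 2 := by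
  induction a, b, sA, sB using greedyTrace.induct with
  | case1 => simp [greedyTrace]
  | case2 x as sA sB ih =>
    have hrest : 0 ≤ as.sum := List.sum_nonneg fun z hz => (ha z (.tail _ hz)).1
    have hx := (ha x List.mem_cons_self).1
    simp only [List.sum_cons, List.sum_nil] at hsum
    have hd' : |sA + x - sB| ≤ (A + B) / 2 :=
      (abs_le_abs_of_nonpos (by linarith) (by linarith)).trans hd
    rw [greedyTrace, List.forall_mem_cons]
    exact ⟨hd', ih (fun z hz => ha z (.tail _ hz)) hb (by rw [List.sum_nil]; linarith) hd'⟩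
  | case3 y bs sA sB ih =>
    have hrest : 0 ≤ bs.sum := List.sum_nonneg fun z hz => (hb z (.tail _ hz)).1
    have hy := (hb y List.mem_cons_self).1
    simp only [List.sum_cons, List.sum_nil] at hsum
    have hd' : |sA - (sB + y)| ≤ (A + B) / 2 :=
      (abs_le_abs_of_nonneg (by linarith) (by linarith)).trans hd
    rw [greedyTrace, List.forall_mem_cons]
    exact ⟨hd', ih ha (fun z hz => hb z (.tail _ hz)) (by rw [List.sum_nil]; linarith) hd'⟩
  | case4 x as y bs sA sB hchoice ih =>
    obtain ⟨hx, hxA⟩ := ha x List.mem_cons_self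
    obtain ⟨hy, hyB⟩ := hb y List.mem_cons_self
    have hmin := min_abs_add_abs_sub_le hd hx hy (show x + y ≤ 2 * ((A + B) / 2) by linarith)
    rw [sub_add_eq_add_sub, sub_sub, min_eq_left hchoice] at hmin
    simp only [List.sum_cons] at hsum
    rw [greedyTrace, if_pos hchoice, List.forall_mem_cons]
    exact ⟨hmin, ih (fun z hz => ha z (.tail _ hz)) hb (by rw [List.sum_cons]; linarith) hmin⟩
  | case5 x as y bs sA sB hchoice ih =>
    obtain ⟨hx, hxA⟩ := ha x List.mem_cons_self
    obtain ⟨hy, hyB⟩ := hb y List.mem_cons_self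
    have hmin := min_abs_add_abs_sub_le hd hx hy (show x + y ≤ 2 * ((A + B) / 2) by linarith)
    rw [sub_add_eq_add_sub, sub_sub, min_eq_right (le_of_not_ge hchoice)] at hmin
    simp only [List.sum_cons] at hsum
    rw [greedyTrace, if_neg hchoice, List.forall_mem_cons]
    exact ⟨hmin, ih ha (fun z hz => hb z (.tail _ hz)) (by rw [List.sum_cons]; linarith) hmin⟩

/-- For nonincreasing nonnegative sequences a, b each summing
to 1, every prefix of the greedy merge satisfies
|S_A - S_B| ≤ (a₁ + b₁)/2. -/
theorem stmt_8 (a b : List ℝ)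
    (ha : a.Pairwise (· ≥ ·)) (hb : b.Pairwise (· ≥ ·))
    (ha0 : ∀ x ∈ a, 0 ≤ x) (hb0 : ∀ x ∈ b, 0 ≤ x)
    (hsa : a.sum = 1) (hsb : b.sum = 1) :
    ∀ s ∈ greedyTrace a b 0 0, |s.1 - s.2| ≤ (a.headD 0 + b.headD 0) / 2 := by
  have hstart : |(0 : ℝ) - 0| ≤ (a.headD 0 + b.headD 0) / 2 := by
    have := List.headD_nonneg ha0
    have := List.headD_nonneg hb0
    rw [sub_self, abs_zero]
    positivity
  exact abs_sub_le_of_mem_greedyTrace a b 0 0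
    (fun x hx => ⟨ha0 x hx, List.le_headD_of_pairwise_ge ha x hx⟩)
    (fun x hx => ⟨hb0 x hx, List.le_headD_of_pairwise_ge hb x hx⟩)
    (by rw [hsa, hsb]) hstart
end

section
/- For G groups with normalized nonincreasing relevance sequences (each group's fractions sum to 1), define the greedy rule: at each step append the top remaining element of the group that minimizes δ(σ) = max_g F_g - min_g F_g, where F_g is the cumulative fraction of group g selected. Then at every step k, δ(σ_k) ≤ δ_max := max_g f_g(1), where f_g(1) is the largest relevance fraction of group g. Specifically: if at step k-1 the bound holds and the group with minimal F selects its next element, making its F exceed the previous maximum, then the new gap is at most its added fraction, which is ≤ δ_max. -/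
/-!
The greedy choice is never worse than extending a remaining group of smallest cumulative fraction.
Such a group is a global minimiser, since an exhausted group has collected its full mass `1`,
which bounds every partial sum. Raising the minimum of a family by `a ≥ 0` increases its spread
`max - min` to at most `max (old spread) a`, and `a ≤ δ_max` because each group's fractions are
bounded by its first one; induction on `k` gives the bound.
-/

open Finset Function

section Spread

variable {ι α : Type*} [DecidableEq ι] {s : Finset ι} (hs : s.Nonempty)

theorem Finset.sup'_update_le_max [LinearOrder α] (f : ι → α) (i : ι) (b : α) :
    s.sup' hs (update f i b) ≤ max (s.sup' hs f) b := by
  refine sup'_le _ _ fun j hj => ?_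
  rcases eq_or_ne j i with rfl | hji
  · simp
  · rw [update_of_ne hji]
    exact le_max_of_le_left (le_sup' f hj)

theorem Finset.le_inf'_update_of_forall_le [LinearOrder α] {f : ι → α} {i : ι} {b : α}
    (hmin : ∀ j ∈ s, f i ≤ f j) (hb : f i ≤ b) : f i ≤ s.inf' hs (update f i b) := by
  refine le_inf' _ _ fun j hj => ?_
  rcases eq_or_ne j i with rfl | hji
  · simpa
  · rw [update_of_ne hji]
    exact hmin j hj

theorem Finset.sup'_sub_inf'_update_add_le [AddCommGroup α] [LinearOrder α]
    [IsOrderedAddMonoid α] {f : ι → α} {i : ι} {a : α} (hi : i ∈ s)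
    (hmin : ∀ j ∈ s, f i ≤ f j) (ha : 0 ≤ a) :
    s.sup' hs (update f i (f i + a)) - s.inf' hs (update f i (f i + a))
      ≤ max (s.sup' hs f - s.inf' hs f) a :=
  calc _ ≤ max (s.sup' hs f) (f i + a) - f i :=
        sub_le_sub (sup'_update_le_max hs f i _)
          (le_inf'_update_of_forall_le hs hmin (le_add_of_nonneg_right ha))
    _ = max (s.sup' hs f - f i) a := by rw [← max_sub_sub_right, add_sub_cancel_left]
    _ ≤ max (s.sup' hs f - s.inf' hs f) a := by
        gcongr
        exact inf'_le f hi

end Spread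

theorem List.Pairwise.getElem_le_headD {α : Type*} [Preorder α] {l : List α}
    (h : l.Pairwise (· ≥ ·)) {n : ℕ} (hn : n < l.length) (d : α) : l[n] ≤ l.headD d := by
  cases l with
  | nil => simp at hn
  | cons x t =>
    cases n with
    | zero => exact le_rfl
    | succ n => exact (List.pairwise_cons.1 h).1 _ (List.getElem_mem _)

section GreedyMerge

variable {ι : Type*} (L : ι → List ℝ)

def cumFrac (cnt : ι → ℕ) (g : ι) : ℝ := ((L g).take (cnt g)).sum

theorem cumFrac_update_succ [DecidableEq ι] (cnt : ι → ℕ) (i : ι)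
    (hi : cnt i < (L i).length) :
    cumFrac L (update cnt i (cnt i + 1))
      = update (cumFrac L cnt) i (cumFrac L cnt i + (L i)[cnt i]) := by
  funext g
  rcases eq_or_ne g i with rfl | hg
  · simp [cumFrac, List.sum_take_succ _ _ hi]
  · simp [cumFrac, update_of_ne hg]

theorem exists_remaining_forall_cumFrac_le [Fintype ι] (hnonneg : ∀ g, ∀ x ∈ L g, 0 ≤ x)
    (hsum : ∀ g, (L g).sum = 1) (cnt : ι → ℕ) (hbound : ∀ g, cnt g ≤ (L g).length)
    (hrem : ∃ g, cnt g < (L g).length) :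
    ∃ i, cnt i < (L i).length ∧ ∀ g, cumFrac L cnt i ≤ cumFrac L cnt g := by
  obtain ⟨i, hi, hmin⟩ := (univ.filter fun g => cnt g < (L g).length).exists_min_image
    (cumFrac L cnt) (hrem.imp fun g hg => mem_filter.2 ⟨mem_univ g, hg⟩)
  refine ⟨i, (mem_filter.1 hi).2, fun g => ?_⟩
  by_cases hg : cnt g < (L g).length
  · exact hmin g (by simp [hg])
  · have hfull : cnt g = (L g).length := (hbound g).antisymm (not_lt.1 hg)
    calc cumFrac L cnt i ≤ (L i).sum := (List.take_sublist _ _).sum_le_sum (hnonneg i)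
      _ = cumFrac L cnt g := by rw [hsum, cumFrac, hfull, List.take_length, hsum]

theorem exists_step_sup'_sub_inf'_cumFrac_le [Fintype ι] [DecidableEq ι]
    (hne : (univ : Finset ι).Nonempty) (hsorted : ∀ g, (L g).Pairwise (· ≥ ·))
    (hnonneg : ∀ g, ∀ x ∈ L g, 0 ≤ x) (hsum : ∀ g, (L g).sum = 1) (cnt : ι → ℕ)
    (hbound : ∀ g, cnt g ≤ (L g).length) (hrem : ∃ g, cnt g < (L g).length) :
    ∃ i, cnt i < (L i).length ∧
      univ.sup' hne (cumFrac L (update cnt i (cnt i + 1)))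
        - univ.inf' hne (cumFrac L (update cnt i (cnt i + 1)))
      ≤ max (univ.sup' hne (cumFrac L cnt) - univ.inf' hne (cumFrac L cnt))
          (univ.sup' hne fun g => (L g).headD 0) := by
  obtain ⟨i, hi, hmin⟩ := exists_remaining_forall_cumFrac_le L hnonneg hsum cnt hbound hrem
  refine ⟨i, hi, ?_⟩
  rw [cumFrac_update_succ L cnt i hi]
  refine (sup'_sub_inf'_update_add_le hne (mem_univ i) (fun g _ => hmin g)
    (hnonneg i _ (List.getElem_mem hi))).trans (max_le_max_left _ ?_)
  exact ((hsorted i).getElem_le_headD hi 0).trans (le_sup' (fun g => (L g).headD 0) (mem_univ i))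

end GreedyMerge

theorem stmt_12_general {G : ℕ} (L : Fin G → List ℝ)
    (hsorted : ∀ g, (L g).Pairwise (· ≥ ·))
    (hnonneg : ∀ g, ∀ x ∈ L g, 0 ≤ x)
    (hsum : ∀ g, (L g).sum = 1)
    (hne : (Finset.univ : Finset (Fin G)).Nonempty)
    (F : (Fin G → ℕ) → Fin G → ℝ)
    (hF : ∀ cnt g, F cnt g = ((L g).take (cnt g)).sum)
    (gap : (Fin G → ℕ) → ℝ)
    (hgap : ∀ cnt, gap cnt
      = Finset.univ.sup' hne (F cnt) - Finset.univ.inf' hne (F cnt))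
    (δmax : ℝ) (hδmax : δmax = Finset.univ.sup' hne (fun g => (L g).headD 0))
    (c : ℕ → Fin G → ℕ)
    (hc0 : ∀ g, c 0 g = 0)
    (hbound : ∀ k g, c k g ≤ (L g).length)
    (hstop : ∀ k, (¬ ∃ g, c k g < (L g).length) → c (k + 1) = c k)
    (hgreedy : ∀ k g', c k g' < (L g').length →
        gap (c (k + 1)) ≤ gap (Function.update (c k) g' (c k g' + 1))) :
    (∀ k, gap (c k) ≤ δmax)
    ∧ (∀ (Fv : Fin G → ℝ) (g0 : Fin G) (a : ℝ),
        (∀ g, Fv g0 ≤ Fv g) →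
        Finset.univ.sup' hne Fv - Finset.univ.inf' hne Fv ≤ δmax →
        0 ≤ a → a ≤ δmax →
        (∀ g, Fv g ≤ Fv g0 + a) →
        Finset.univ.sup' hne (Function.update Fv g0 (Fv g0 + a))
          - Finset.univ.inf' hne (Function.update Fv g0 (Fv g0 + a)) ≤ a) := by
  obtain rfl : F = cumFrac L := funext fun cnt => funext (hF cnt)
  obtain rfl : gap = _ := funext hgap
  have hδ0 : 0 ≤ δmax := by
    obtain ⟨g, -⟩ := id hne
    refine hδmax ▸ le_sup'_of_le _ (mem_univ g) ?_
    cases hL : L g with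
    | nil => exact le_rfl
    | cons x t => exact hnonneg g x (hL ▸ List.mem_cons_self)
  refine ⟨fun k => ?_, fun Fv g0 a hmin _ ha _ hbd => ?_⟩
  · induction k with
    | zero =>
      dsimp only
      rw [show cumFrac L (c 0) = fun _ => 0 from funext fun g => by simp [cumFrac, hc0],
        sup'_const, inf'_const, sub_self]
      exact hδ0
    | succ k ih =>
      by_cases hrem : ∃ g, c k g < (L g).length
      · obtain ⟨i, hi, hle⟩ := exists_step_sup'_sub_inf'_cumFrac_le L hne hsorted hnonneg hsum
          (c k) (hbound k) hrem
        exact (hgreedy k i hi).trans (hle.trans (max_le ih hδmax.ge))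
      · rwa [hstop k hrem]
  · have hspread : univ.sup' hne Fv - univ.inf' hne Fv ≤ a :=
      sub_le_iff_le_add'.2 ((sup'_le _ _ fun g _ => hbd g).trans
        (add_le_add_left (le_inf' _ _ fun g _ => hmin g) a))
    exact (sup'_sub_inf'_update_add_le hne (mem_univ g0) (fun g _ => hmin g) ha).trans
      (max_le hspread le_rfl)

/-- Multi-group greedy merge invariant. For G groups, each with
a nonincreasing sequence of nonnegative fractions summing to 1, the greedy
rule (append the top remaining element of a group minimizing the resulting
gap δ = max_g F_g - min_g F_g) maintains δ(σ_k) ≤ δ_max = max_g f_g(1) at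
every step k. The second conjunct is the key inductive step: if the group
with minimal F adds a fraction a ≤ δ_max so that its F exceeds the previous
maximum, then the new gap is at most a. -/
theorem stmt_12 {G : ℕ} (hG : 0 < G) (L : Fin G → List ℝ)
    (hsorted : ∀ g, (L g).Pairwise (· ≥ ·))
    (hnonneg : ∀ g, ∀ x ∈ L g, 0 ≤ x)
    (hsum : ∀ g, (L g).sum = 1)
    (hne : (Finset.univ : Finset (Fin G)).Nonempty)
    (F : (Fin G → ℕ) → Fin G → ℝ)
    (hF : ∀ cnt g, F cnt g = ((L g).take (cnt g)).sum)
    (gap : (Fin G → ℕ) → ℝ)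
    (hgap : ∀ cnt, gap cnt
      = Finset.univ.sup' hne (F cnt) - Finset.univ.inf' hne (F cnt))
    (δmax : ℝ) (hδmax : δmax = Finset.univ.sup' hne (fun g => (L g).headD 0))
    (c : ℕ → Fin G → ℕ)
    (hc0 : ∀ g, c 0 g = 0)
    (hbound : ∀ k g, c k g ≤ (L g).length)
    (hstep : ∀ k, (∃ g, c k g < (L g).length) →
        ∃ g, c k g < (L g).length
          ∧ c (k + 1) = Function.update (c k) g (c k g + 1))
    (hstop : ∀ k, (¬ ∃ g, c k g < (L g).length) → c (k + 1) = c k)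
    (hgreedy : ∀ k g', c k g' < (L g').length →
        gap (c (k + 1)) ≤ gap (Function.update (c k) g' (c k g' + 1))) :
    (∀ k, gap (c k) ≤ δmax)
    ∧ (∀ (Fv : Fin G → ℝ) (g0 : Fin G) (a : ℝ),
        (∀ g, Fv g0 ≤ Fv g) →
        Finset.univ.sup' hne Fv - Finset.univ.inf' hne Fv ≤ δmax →
        0 ≤ a → a ≤ δmax →
        (∀ g, Fv g ≤ Fv g0 + a) →
        Finset.univ.sup' hne (Function.update Fv g0 (Fv g0 + a))
          - Finset.univ.inf' hne (Function.update Fv g0 (Fv g0 + a)) ≤ a) :=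
  stmt_12_general L hsorted hnonneg hsum hne F hF gap hgap δmax hδmax c hc0 hbound hstop hgreedy
end

section
/- For the multi-group LP with G(G−1) pairwise EOR constraints, the duality gap decomposes pairwise: for the EOR feasible solution X selecting k_g top elements from each group g, g(λ) − f(X) = Σ_{{A,B}} [δ(λ_{A,B} + λ_{B,A}) − (S_A − S_B)(λ_{A,B} − λ_{B,A})], where S_g = Σ_{i=1}^{k_g} q_i is the selected normalized relevance of group g; and if |S_A − S_B| ≤ δ for all pairs, this gap is at most (2δ/((G−1)N))·Σ_{{A,B}} |p_A − p_B|/(q_A + q_B), the sum over all unordered pairs of groups. -/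
/-!
Every selected candidate's dual `λ'_i` absorbs its own relevance `p_i / N` and one copy of `λ_k`,
so the gap reduces to `δ Σ λ_{A,B} - Σ_A S_A Σ_{B ≠ A} (λ_{A,B} - λ_{B,A})`, which splits into
unordered pairs after symmetrising. At most one of `λ_{A,B}`, `λ_{B,A}` is nonzero, so their sum is
`|p_A - p_B| / ((q_A + q_B)(G - 1)N)`, while `|S_A - S_B| ≤ δ` bounds the antisymmetric part of each
pair term by `δ (λ_{A,B} + λ_{B,A})`.
-/

open Finset

section OffDiagonal

variable {Γ : Type*} [Fintype Γ] [DecidableEq Γ]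

theorem sum_sum_erase_comm {M : Type*} [AddCommMonoid M] (F : Γ → Γ → M) :
    ∑ A, ∑ B ∈ univ.erase A, F A B = ∑ A, ∑ B ∈ univ.erase A, F B A :=
  sum_comm' fun A B => by simp only [mem_univ, mem_erase, true_and, and_true]; exact ne_comm

theorem sum_sum_erase_eq_half_sum_add_swap (F : Γ → Γ → ℝ) :
    ∑ A, ∑ B ∈ univ.erase A, F A B = (1 / 2) * ∑ A, ∑ B ∈ univ.erase A, (F A B + F B A) := by
  simp only [sum_add_distrib, ← sum_sum_erase_comm (fun A B => F B A)]
  ring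

theorem mul_sum_sum_erase_sub_sum_mul_sum_erase_sub_swap (lam : Γ → Γ → ℝ) (s : Γ → ℝ) (δ : ℝ) :
    δ * (∑ A, ∑ B ∈ univ.erase A, lam A B)
        - ∑ A, s A * ∑ B ∈ univ.erase A, (lam A B - lam B A)
      = (1 / 2) * ∑ A, ∑ B ∈ univ.erase A,
          (δ * (lam A B + lam B A) - (s A - s B) * (lam A B - lam B A)) := by
  have hsplit : δ * (∑ A, ∑ B ∈ univ.erase A, lam A B)
        - ∑ A, s A * ∑ B ∈ univ.erase A, (lam A B - lam B A)
      = ∑ A, ∑ B ∈ univ.erase A, (δ * lam A B - s A * (lam A B - lam B A)) := by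
    rw [mul_sum, ← sum_sub_distrib]
    refine sum_congr rfl fun A _ => ?_
    rw [mul_sum, mul_sum, ← sum_sub_distrib]
  rw [hsplit, sum_sum_erase_eq_half_sum_add_swap]
  congr 1
  refine sum_congr rfl fun A _ => sum_congr rfl fun B _ => ?_
  ring

end OffDiagonal

theorem sum_div_mul_eq_sum_fiberwise {ι Γ : Type*} [Fintype Γ] [DecidableEq Γ]
    (S : Finset ι) (grp : ι → Γ) (p : ι → ℝ) (w c : Γ → ℝ) :
    ∑ i ∈ S, p i / w (grp i) * c (grp i) = ∑ A, (∑ i ∈ S with grp i = A, p i / w A) * c A := by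
  rw [← sum_fiberwise S grp]
  refine sum_congr rfl fun A _ => ?_
  rw [sum_mul]
  exact sum_congr rfl fun i hi => by rw [(mem_filter.mp hi).2]

theorem max_div_zero_add_max_div_zero_swap {a b u v c : ℝ} (huv : 0 ≤ u + v) :
    max ((a - b) / (u + v)) 0 / c + max ((b - a) / (v + u)) 0 / c = |a - b| / (u + v) / c := by
  rw [← add_div, add_comm v, ← neg_sub a b, neg_div, max_zero_add_max_neg_zero_eq_abs_self,
    abs_div, abs_of_nonneg huv]

theorem mul_add_sub_mul_sub_le {s δ a b : ℝ} (hs : |s| ≤ δ) (ha : 0 ≤ a) (hb : 0 ≤ b) :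
    δ * (a + b) - s * (a - b) ≤ 2 * δ * (a + b) := by
  have hab : |a - b| ≤ a + b := abs_sub_le_of_nonneg_of_le ha (by linarith) hb (by linarith)
  have : |s * (a - b)| ≤ δ * (a + b) := by
    rw [abs_mul]; exact mul_le_mul hs hab (abs_nonneg _) ((abs_nonneg s).trans hs)
  linarith [neg_abs_le (s * (a - b))]

theorem stmt_14_general {ι Γ : Type*} [Fintype ι] [Fintype Γ] [DecidableEq ι] [DecidableEq Γ]
    (grp : ι → Γ) (p : ι → ℝ)
    (G : ℕ) (hG : 2 ≤ G)
    (nRel : Γ → ℝ)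
    (hnRelpos : ∀ g, 0 < nRel g)
    (N : ℝ) (hN : N = ∑ g, nRel g)
    (pg : Γ → ℝ) (hpg : ∀ g, 0 < pg g ∧ pg g ≤ 1)
    (q : Γ → ℝ) (hq : ∀ g, q g = pg g / nRel g)
    (lam : Γ → Γ → ℝ)
    (hlam : ∀ A B, lam A B
      = max ((pg A - pg B) / (q A + q B)) 0 / (((G : ℝ) - 1) * N))
    (lk : ℝ)
    (S : Finset ι) (k : ℕ) (hk : k = S.card)
    (l' : ι → ℝ)
    (hl' : ∀ i, l' i = if i ∈ S then
        p i / N - lk - (p i / nRel (grp i))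
          * ∑ g ∈ Finset.univ.erase (grp i), (lam (grp i) g - lam g (grp i))
      else 0)
    (Ssel : Γ → ℝ)
    (hSsel : ∀ g, Ssel g = ∑ i ∈ S.filter (fun i => grp i = g), p i / nRel g)
    (δ : ℝ)
    (f gd : ℝ)
    (hf : f = (∑ i ∈ S, p i) / N)
    (hgd : gd = δ * (∑ A, ∑ B ∈ Finset.univ.erase A, lam A B)
              + (k : ℝ) * lk + ∑ i, l' i) :
    gd - f = (1 / 2) * ∑ A, ∑ B ∈ Finset.univ.erase A,
        (δ * (lam A B + lam B A) - (Ssel A - Ssel B) * (lam A B - lam B A))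
    ∧ ((∀ A B : Γ, A ≠ B → |Ssel A - Ssel B| ≤ δ) →
        gd - f ≤ (2 * δ / (((G : ℝ) - 1) * N))
          * ((1 / 2) * ∑ A, ∑ B ∈ Finset.univ.erase A,
              |pg A - pg B| / (q A + q B))) := by
  have hl'sum : ∑ i, l' i = (∑ i ∈ S, p i) / N - k * lk
      - ∑ A, Ssel A * ∑ B ∈ univ.erase A, (lam A B - lam B A) := by
    simp_rw [hl']
    rw [sum_ite_mem, univ_inter, sum_sub_distrib, sum_sub_distrib, sum_div_mul_eq_sum_fiberwise S grp
      p nRel (fun A => ∑ B ∈ univ.erase A, (lam A B - lam B A)), sum_const, hk, nsmul_eq_mul, sum_div]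
    simp only [← hSsel]
  have hgap : gd - f = (1 / 2) * ∑ A, ∑ B ∈ univ.erase A,
      (δ * (lam A B + lam B A) - (Ssel A - Ssel B) * (lam A B - lam B A)) := by
    rw [← mul_sum_sum_erase_sub_sum_mul_sum_erase_sub_swap, hgd, hf, hl'sum]
    ring
  refine ⟨hgap, fun hS => ?_⟩
  have hc : 0 ≤ ((G : ℝ) - 1) * N :=
    mul_nonneg (by linarith [show (2 : ℝ) ≤ G by exact_mod_cast hG])
      (hN ▸ sum_nonneg fun g _ => (hnRelpos g).le)
  have hq : ∀ g, 0 ≤ q g := fun g => hq g ▸ div_nonneg (hpg g).1.le (hnRelpos g).le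
  have hlam_nonneg : ∀ A B, 0 ≤ lam A B := fun A B => hlam A B ▸ div_nonneg (le_max_right _ _) hc
  have hlam_add : ∀ A B, lam A B + lam B A = |pg A - pg B| / (q A + q B) / ((G - 1) * N) :=
    fun A B => by rw [hlam, hlam]; exact max_div_zero_add_max_div_zero_swap (add_nonneg (hq A) (hq B))
  calc gd - f ≤ 1 / 2 * ∑ A, ∑ B ∈ univ.erase A,
        2 * δ / ((G - 1) * N) * (|pg A - pg B| / (q A + q B)) := by
        rw [hgap]
        gcongr with A _ B hB
        calc _ ≤ 2 * δ * (lam A B + lam B A) :=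
              mul_add_sub_mul_sub_le (hS A B (mem_erase.mp hB).1.symm) (hlam_nonneg A B)
                (hlam_nonneg B A)
          _ = _ := by rw [hlam_add]; ring
    _ = _ := by simp_rw [← mul_sum]; ring

/-- Multi-group duality gap decomposition. For the EOR feasible
solution X (indicator of the selected set S) and the constructed dual
variables, the duality gap g(λ) - f(X) equals the sum over unordered pairs
{A,B} of δ(λ_{A,B}+λ_{B,A}) - (S_A - S_B)(λ_{A,B} - λ_{B,A}) (written via
half the sum over ordered distinct pairs); and if |S_A - S_B| ≤ δ for all
pairs, the gap is at most (2δ/((G-1)N))·Σ_{{A,B}} |p_A - p_B|/(q_A + q_B). -/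
theorem stmt_14 {ι Γ : Type*} [Fintype ι] [Fintype Γ] [DecidableEq ι] [DecidableEq Γ]
    (grp : ι → Γ) (p : ι → ℝ) (hp : ∀ i, 0 ≤ p i ∧ p i ≤ 1)
    (G : ℕ) (hGcard : G = Fintype.card Γ) (hG : 2 ≤ G)
    (nRel : Γ → ℝ)
    (hnRel : ∀ g, nRel g = ∑ i ∈ Finset.univ.filter (fun i => grp i = g), p i)
    (hnRelpos : ∀ g, 0 < nRel g)
    (N : ℝ) (hN : N = ∑ g, nRel g)
    (pg : Γ → ℝ) (hpg : ∀ g, 0 < pg g ∧ pg g ≤ 1)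
    (q : Γ → ℝ) (hq : ∀ g, q g = pg g / nRel g)
    (lam : Γ → Γ → ℝ)
    (hlam : ∀ A B, lam A B
      = max ((pg A - pg B) / (q A + q B)) 0 / (((G : ℝ) - 1) * N))
    (lk : ℝ)
    (hlk : ∀ A : Γ, lk
      = pg A / N - q A * ∑ g ∈ Finset.univ.erase A, (lam A g - lam g A))
    (S : Finset ι) (k : ℕ) (hk : k = S.card)
    (l' : ι → ℝ)
    (hl' : ∀ i, l' i = if i ∈ S then
        p i / N - lk - (p i / nRel (grp i))
          * ∑ g ∈ Finset.univ.erase (grp i), (lam (grp i) g - lam g (grp i))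
      else 0)
    (Ssel : Γ → ℝ)
    (hSsel : ∀ g, Ssel g = ∑ i ∈ S.filter (fun i => grp i = g), p i / nRel g)
    (δ : ℝ) (hδ : 0 ≤ δ)
    (f gd : ℝ)
    (hf : f = (∑ i ∈ S, p i) / N)
    (hgd : gd = δ * (∑ A, ∑ B ∈ Finset.univ.erase A, lam A B)
              + (k : ℝ) * lk + ∑ i, l' i) :
    gd - f = (1 / 2) * ∑ A, ∑ B ∈ Finset.univ.erase A,
        (δ * (lam A B + lam B A) - (Ssel A - Ssel B) * (lam A B - lam B A))
    ∧ ((∀ A B : Γ, A ≠ B → |Ssel A - Ssel B| ≤ δ) →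
        gd - f ≤ (2 * δ / (((G : ℝ) - 1) * N))
          * ((1 / 2) * ∑ A, ∑ B ∈ Finset.univ.erase A,
              |pg A - pg B| / (q A + q B))) :=
  stmt_14_general grp p G hG nRel hnRelpos N hN pg hpg q hq lam hlam lk S k hk l' hl' Ssel hSsel δ f
    gd hf hgd
end
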